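/- arXiv:2004.04397 — 4 statements merged into one kernel-verified Lean document; each statement's English description precedes it below -/
import Mathlib

section
/- In the one-period binomial model, the bid price under the mean semi-deviation of order 1 at level β equals the expectation of S_{Δt} under the tilted probability p̃ = p(1 − β(1−p)): that is, −SD_{1,β}(−S_{Δt}) = p̃·S₀e^{σ√Δt} + (1−p̃)·S₀e^{−σ√Δt}. -/
open MeasureTheory

/-!
A random variable taking the value `a` with probability `q` and `b` otherwise has mean
`q a + (1 - q) b`, and its deviations from the mean are `(1 - q)(a - b)` and `q (b - a)`, so its
expected positive deviation is `q (1 - q) |b - a|`. For `Y = -S_{Δt}` this gives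
`-SD_{1,β}(-S_{Δt}) = p u + (1 - p) d - β p (1 - p) (u - d)`, which is the `p̃`-expectation.
-/

/-- The mean semi-deviation of order 1: `SD_{1,β}(Y) = E[Y] + β E[(Y − E[Y])₊]`. -/
noncomputable def meanSemiDeviation1 {Ω : Type*} [MeasurableSpace Ω] (μ : Measure Ω)
    (β : ℝ) (Y : Ω → ℝ) : ℝ :=
  ∫ ω, Y ω ∂μ + β * ∫ ω, max (Y ω - ∫ ω, Y ω ∂μ) 0 ∂μ

section TwoValued

variable {Ω : Type*} [MeasurableSpace Ω] (P : Measure Ω) [IsProbabilityMeasure P]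

theorem integral_comp_of_forall_eq_or_eq {α : Type*} {Y : Ω → α} {a b : α}
    (hA : MeasurableSet {ω | Y ω = a}) (hY : ∀ ω, Y ω = a ∨ Y ω = b) (f : α → ℝ) :
    ∫ ω, f (Y ω) ∂P =
      P.real {ω | Y ω = a} * f a + (1 - P.real {ω | Y ω = a}) * f b := by
  classical
  have hf : (fun ω => f (Y ω)) = {ω | Y ω = a}.piecewise (fun _ => f a) (fun _ => f b) := by
    funext ω
    by_cases h : Y ω = a
    · simp [h]
    · rw [Set.piecewise_eq_of_notMem _ _ _ (show ω ∉ {ω | Y ω = a} from h),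
        (hY ω).resolve_left h]
  rw [hf, integral_piecewise hA integrableOn_const integrableOn_const, setIntegral_const,
    setIntegral_const, probReal_compl_eq_one_sub hA, smul_eq_mul, smul_eq_mul]

theorem meanSemiDeviation1_of_forall_eq_or_eq {Y : Ω → ℝ} {a b : ℝ} (β : ℝ)
    (hA : MeasurableSet {ω | Y ω = a}) (hY : ∀ ω, Y ω = a ∨ Y ω = b) :
    meanSemiDeviation1 P β Y =
      P.real {ω | Y ω = a} * a + (1 - P.real {ω | Y ω = a}) * b +
        β * (P.real {ω | Y ω = a} * (1 - P.real {ω | Y ω = a}) * |b - a|) := by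
  have hmean : ∫ ω, Y ω ∂P = P.real {ω | Y ω = a} * a + (1 - P.real {ω | Y ω = a}) * b :=
    integral_comp_of_forall_eq_or_eq P hA hY id
  rw [meanSemiDeviation1,
    integral_comp_of_forall_eq_or_eq P hA hY (fun y => max (y - ∫ ω, Y ω ∂P) 0), hmean]
  set q := P.real {ω | Y ω = a}
  have hq : 0 ≤ q := measureReal_nonneg
  have hq' : 0 ≤ 1 - q := sub_nonneg.2 measureReal_le_one
  have ha : max (a - (q * a + (1 - q) * b)) 0 = (1 - q) * max (a - b) 0 := by
    rw [mul_max_of_nonneg _ _ hq', mul_zero]; ring_nf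
  have hb : max (b - (q * a + (1 - q) * b)) 0 = q * max (b - a) 0 := by
    rw [mul_max_of_nonneg _ _ hq, mul_zero]; ring_nf
  rw [ha, hb, ← max_zero_add_max_neg_zero_eq_abs_self (b - a), neg_sub]
  ring

end TwoValued

theorem stmt_8_general {Ω : Type*} [MeasurableSpace Ω] (P : Measure Ω) [IsProbabilityMeasure P]
    (S₀ σ Δt β p : ℝ) (hS₀ : 0 < S₀) (hσ : 0 < σ)
    (hp : p ∈ Set.Ioo (0 : ℝ) 1)
    (S : Ω → ℝ) (hS : Measurable S)
    (hup : P {ω | S ω = S₀ * Real.exp (σ * Real.sqrt Δt)} = ENNReal.ofReal p)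
    (hvals : ∀ ω, S ω = S₀ * Real.exp (σ * Real.sqrt Δt) ∨
      S ω = S₀ * Real.exp (-(σ * Real.sqrt Δt))) :
    -(meanSemiDeviation1 P β (fun ω => -S ω)) =
      (p * (1 - β * (1 - p))) * (S₀ * Real.exp (σ * Real.sqrt Δt)) +
        (1 - p * (1 - β * (1 - p))) * (S₀ * Real.exp (-(σ * Real.sqrt Δt))) := by
  set u := S₀ * Real.exp (σ * Real.sqrt Δt)
  set d := S₀ * Real.exp (-(σ * Real.sqrt Δt))
  have hdu : d ≤ u := by
    have : 0 ≤ σ * Real.sqrt Δt := mul_nonneg hσ.le (Real.sqrt_nonneg Δt)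
    exact mul_le_mul_of_nonneg_left (Real.exp_le_exp.2 (by linarith)) hS₀.le
  have hup_neg : {ω | -S ω = -u} = {ω | S ω = u} := by simp only [neg_inj]
  have hq : P.real {ω | -S ω = -u} = p := by
    rw [hup_neg, measureReal_def, hup, ENNReal.toReal_ofReal hp.1.le]
  rw [meanSemiDeviation1_of_forall_eq_or_eq P β (hup_neg ▸ hS (measurableSet_singleton u))
      (fun ω => (hvals ω).imp neg_inj.2 neg_inj.2), hq, abs_of_nonneg (by linarith)]
  ring

/-- In the one-period binomial model, the bid price under the order-1 mean semi-deviation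
at level `β` equals the expectation of `S_{Δt}` under the tilted probability
`p̃ = p(1 − β(1 − p))`. -/
theorem stmt_8 {Ω : Type*} [MeasurableSpace Ω] (P : Measure Ω) [IsProbabilityMeasure P]
    (S₀ σ Δt β p : ℝ) (hS₀ : 0 < S₀) (hσ : 0 < σ) (hΔt : 0 < Δt)
    (hβ : β ∈ Set.Icc (0 : ℝ) 1) (hp : p ∈ Set.Ioo (0 : ℝ) 1)
    (S : Ω → ℝ) (hS : Measurable S)
    (hup : P {ω | S ω = S₀ * Real.exp (σ * Real.sqrt Δt)} = ENNReal.ofReal p)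
    (hvals : ∀ ω, S ω = S₀ * Real.exp (σ * Real.sqrt Δt) ∨
      S ω = S₀ * Real.exp (-(σ * Real.sqrt Δt))) :
    -(meanSemiDeviation1 P β (fun ω => -S ω)) =
      (p * (1 - β * (1 - p))) * (S₀ * Real.exp (σ * Real.sqrt Δt)) +
        (1 - p * (1 - β * (1 - p))) * (S₀ * Real.exp (-(σ * Real.sqrt Δt))) :=
  stmt_8_general P S₀ σ Δt β p hS₀ hσ hp S hS hup hvals
end

section
/- With p = (e^{rΔt} − e^{−σ√Δt})/(e^{σ√Δt} − e^{−σ√Δt}), the risk-adjusted probability p̃ = p(1 − β√Δt (1 − p)) satisfies p̃ = 1/2 + ((r − βσ/2)/(2σ) − σ/4)√Δt + o(Δt) as Δt ↓ 0. -/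
/-!
Write `s = √Δt` and `a = (r - σ²/2)/(2σ)`. Since `e^{σs} - e^{-σs} = 2 sinh(σs)`,
`p - 1/2 - a s = (e^{rs²} - cosh(σs) - 2as sinh(σs)) / (2 sinh(σs))`.
The numerator is even in `s` and its `s²`-coefficient `r - σ²/2 - 2aσ` vanishes,
so it is `O(s⁴)`; the denominator is at least `2σs`, hence `p = 1/2 + a s + O(s³)`.
From `p(1 - p) = 1/4 - (p - 1/2)²` we get
`p̃ = p - βs/4 + βs(p - 1/2)² = 1/2 + (a - β/4)s + O(s³)`,
and `a - β/4 = (r - βσ/2)/(2σ) - σ/4`.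
-/

open Filter Real Topology Asymptotics

lemma exp_sub_one_sub_id_isBigO :
    (fun x : ℝ => exp x - 1 - x) =O[𝓝 0] fun x => x ^ 2 := by
  refine IsBigO.of_bound 1 ?_
  filter_upwards [Metric.closedBall_mem_nhds (0 : ℝ) one_pos] with x hx
  rw [mem_closedBall_zero_iff, norm_eq_abs] at hx
  simpa [norm_eq_abs] using abs_exp_sub_one_sub_id_le hx

lemma exp_sub_taylor_isBigO :
    (fun x : ℝ => exp x - (1 + x + x ^ 2 / 2 + x ^ 3 / 6)) =O[𝓝 0] fun x => x ^ 4 := by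
  refine IsBigO.of_bound 1 ?_
  filter_upwards [Metric.closedBall_mem_nhds (0 : ℝ) one_pos] with x hx
  rw [mem_closedBall_zero_iff, norm_eq_abs] at hx
  have h := Real.exp_bound hx (n := 4) (by norm_num)
  norm_num [Finset.sum_range_succ, Nat.factorial] at h
  rw [norm_eq_abs, norm_eq_abs, one_mul, abs_pow]
  linarith [pow_nonneg (abs_nonneg x) 4]

lemma exp_neg_sub_taylor_isBigO :
    (fun x : ℝ => exp (-x) - (1 - x + x ^ 2 / 2 - x ^ 3 / 6)) =O[𝓝 0] fun x => x ^ 4 := by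
  have h := exp_sub_taylor_isBigO.comp_tendsto (continuous_neg.tendsto' 0 0 neg_zero)
  refine (h.congr_left fun x => ?_).congr_right fun x => ?_ <;> simp only [Function.comp] <;> ring

lemma cosh_sub_taylor_isBigO :
    (fun x : ℝ => cosh x - 1 - x ^ 2 / 2) =O[𝓝 0] fun x => x ^ 4 := by
  refine ((exp_sub_taylor_isBigO.add exp_neg_sub_taylor_isBigO).const_mul_left (1 / 2)).congr_left
    fun x => ?_
  rw [cosh_eq]; ring

lemma sinh_sub_id_isBigO : (fun x : ℝ => sinh x - x) =O[𝓝 0] fun x => x ^ 3 := by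
  have h := ((exp_sub_taylor_isBigO.sub exp_neg_sub_taylor_isBigO).const_mul_left (1 / 2)).trans
    (isLittleO_pow_pow (by norm_num : 3 < 4)).isBigO
  refine (h.add ((isBigO_refl (fun x : ℝ => x ^ 3) _).const_mul_left (1 / 6))).congr_left
    fun x => ?_
  rw [sinh_eq]; ring

lemma Asymptotics.IsBigO.comp_const_mul_pow {f : ℝ → ℝ} {n : ℕ}
    (h : f =O[𝓝 0] fun x => x ^ n) (c : ℝ) {k : ℕ} (hk : k ≠ 0) :
    (fun s => f (c * s ^ k)) =O[𝓝 0] fun s => s ^ (k * n) := by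
  have hlim : Tendsto (fun s : ℝ => c * s ^ k) (𝓝 0) (𝓝 0) :=
    (continuous_const.mul (continuous_pow k)).tendsto' 0 0 (by simp [hk])
  refine (h.comp_tendsto hlim).trans ?_
  exact ((isBigO_refl (fun s : ℝ => s ^ (k * n)) _).const_mul_left (c ^ n)).congr_left
    fun s => by simp only [Function.comp, mul_pow, pow_mul]

lemma exp_sub_cosh_sub_sinh_isBigO (r : ℝ) {σ a : ℝ} (ha : 2 * σ * a = r - σ ^ 2 / 2) :
    (fun s : ℝ => exp (r * s ^ 2) - cosh (σ * s) - 2 * a * s * sinh (σ * s)) =O[𝓝 0]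
      fun s => s ^ 4 := by
  have hexp := exp_sub_one_sub_id_isBigO.comp_const_mul_pow r two_ne_zero
  have hcosh := cosh_sub_taylor_isBigO.comp_const_mul_pow σ one_ne_zero
  have hsinh := (isBigO_refl (fun s : ℝ => s) _).mul
    (sinh_sub_id_isBigO.comp_const_mul_pow σ one_ne_zero)
  have hsinh' := (hsinh.const_mul_left (2 * a)).congr_right (g₂ := (· ^ 4)) fun s => by ring
  refine ((hexp.sub hcosh).sub hsinh').congr_left fun s => ?_
  simp only [pow_one]
  linear_combination s ^ 2 * ha

/-- The Cox–Ross–Rubinstein up-probability `p` as a function of `s = √Δt`. -/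
noncomputable def crrProb (r σ s : ℝ) : ℝ :=
  (exp (r * s ^ 2) - exp (-σ * s)) / (exp (σ * s) - exp (-σ * s))

lemma crrProb_sub_eq (r a : ℝ) {σ s : ℝ} (hs : sinh (σ * s) ≠ 0) :
    crrProb r σ s - 1 / 2 - a * s =
      (exp (r * s ^ 2) - cosh (σ * s) - 2 * a * s * sinh (σ * s)) / (2 * sinh (σ * s)) := by
  rw [sinh_eq] at hs
  have hD : exp (σ * s) - exp (-(σ * s)) ≠ 0 := by contrapose! hs; rw [hs, zero_div]
  rw [crrProb, cosh_eq, sinh_eq, neg_mul]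
  generalize exp (σ * s) = E, exp (-(σ * s)) = F at hD ⊢
  field_simp
  ring

lemma inv_two_sinh_isBigO {σ : ℝ} (hσ : 0 < σ) :
    (fun s : ℝ => (2 * sinh (σ * s))⁻¹) =O[𝓝[>] 0] fun s => s⁻¹ := by
  refine IsBigO.of_bound (2 * σ)⁻¹ ?_
  filter_upwards [self_mem_nhdsWithin] with s (hs : 0 < s)
  have hlow : 2 * σ * s ≤ 2 * sinh (σ * s) := by
    rw [mul_assoc]; gcongr; exact self_le_sinh_iff.2 (by positivity)
  rw [norm_inv, norm_inv, norm_of_nonneg (by linarith [mul_pos (mul_pos two_pos hσ) hs]),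
    norm_of_nonneg hs.le, ← mul_inv]
  exact inv_anti₀ (by positivity) hlow

lemma crrProb_sub_isBigO (r : ℝ) {σ a : ℝ} (hσ : 0 < σ) (ha : 2 * σ * a = r - σ ^ 2 / 2) :
    (fun s => crrProb r σ s - 1 / 2 - a * s) =O[𝓝[>] 0] fun s => s ^ 3 := by
  have h := ((exp_sub_cosh_sub_sinh_isBigO r ha).mono nhdsWithin_le_nhds).mul
    (inv_two_sinh_isBigO hσ)
  refine h.congr' ?_ ?_
  · filter_upwards [self_mem_nhdsWithin] with s (hs : 0 < s)
    rw [crrProb_sub_eq r a (sinh_pos_iff.2 (by positivity)).ne', div_eq_mul_inv]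
  · filter_upwards [self_mem_nhdsWithin] with s (hs : 0 < s)
    field_simp

lemma riskAdjusted_sub_isBigO {l : Filter ℝ} (hl : l ≤ 𝓝 0) {p : ℝ → ℝ} {a : ℝ}
    (β : ℝ) (hp : (fun s => p s - 1 / 2 - a * s) =O[l] fun s => s ^ 3) :
    (fun s => p s * (1 - β * s * (1 - p s)) - 1 / 2 - (a - β / 4) * s) =O[l]
      fun s => s ^ 3 := by
  have hcube : (fun s : ℝ => s ^ 3) =O[l] fun s => s :=
    ((isLittleO_pow_pow (by norm_num : 1 < 3)).isBigO.mono hl).congr_right fun s => pow_one s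
  have hcentered : (fun s => p s - 1 / 2) =O[l] fun s => s :=
    ((isBigO_refl _ _).const_mul_left a |>.add (hp.trans hcube)).congr_left fun s => by ring
  have hquad :=
    ((isBigO_refl (fun s : ℝ => s) l).mul (hcentered.mul hcentered)).const_mul_left β
  refine (hp.add (hquad.congr_right fun s => by ring)).congr_left fun s => ?_
  ring

lemma tendsto_comp_sqrt_div_of_isBigO {f : ℝ → ℝ} (hf : f =O[𝓝[>] 0] fun s => s ^ 3) :
    Tendsto (fun t => f (√t) / t) (𝓝[>] 0) (𝓝 0) := by
  have hsq : Tendsto (fun s => f s / s ^ 2) (𝓝[>] 0) (𝓝 0) :=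
    (hf.trans_isLittleO ((isLittleO_pow_pow (by norm_num : 2 < 3)).mono
      nhdsWithin_le_nhds)).tendsto_div_nhds_zero
  have hsqrt : Tendsto (√·) (𝓝[>] (0 : ℝ)) (𝓝[>] 0) := by
    refine tendsto_nhdsWithin_of_tendsto_nhds_of_eventually_within _ ?_ ?_
    · simpa using continuous_sqrt.tendsto' 0 0 sqrt_zero |>.mono_left nhdsWithin_le_nhds
    · filter_upwards [self_mem_nhdsWithin] with t (ht : 0 < t) using sqrt_pos.2 ht
  refine (hsq.comp hsqrt).congr' ?_
  filter_upwards [self_mem_nhdsWithin] with t (ht : 0 < t)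
  simp only [Function.comp, sq_sqrt ht.le]

theorem stmt_10_general (r σ β : ℝ) (hσ : 0 < σ) :
    Tendsto
      (fun Δt : ℝ =>
        (let p := (Real.exp (r * Δt) - Real.exp (-σ * Real.sqrt Δt)) /
            (Real.exp (σ * Real.sqrt Δt) - Real.exp (-σ * Real.sqrt Δt));
         p * (1 - β * Real.sqrt Δt * (1 - p))
          - 1 / 2 - ((r - β * σ / 2) / (2 * σ) - σ / 4) * Real.sqrt Δt) / Δt)
      (nhdsWithin 0 (Set.Ioi 0)) (nhds 0) := by
  have ha : 2 * σ * ((r - σ ^ 2 / 2) / (2 * σ)) = r - σ ^ 2 / 2 := by field_simp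
  have hc : (r - β * σ / 2) / (2 * σ) - σ / 4 = (r - σ ^ 2 / 2) / (2 * σ) - β / 4 := by
    field_simp; ring
  refine (tendsto_comp_sqrt_div_of_isBigO (riskAdjusted_sub_isBigO nhdsWithin_le_nhds β
    (crrProb_sub_isBigO r hσ ha))).congr' ?_
  filter_upwards [self_mem_nhdsWithin] with t (ht : 0 < t)
  simp only [crrProb, sq_sqrt ht.le, hc]

/-- Asymptotic expansion of the risk-adjusted probability `p̃ = p(1 − β√Δt(1 − p))`:
`p̃ = 1/2 + ((r − βσ/2)/(2σ) − σ/4)√Δt + o(Δt)` as `Δt ↓ 0`. -/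
theorem stmt_10 (r σ β : ℝ) (hσ : 0 < σ) (hβ : 0 ≤ β) :
    Tendsto
      (fun Δt : ℝ =>
        (let p := (Real.exp (r * Δt) - Real.exp (-σ * Real.sqrt Δt)) /
            (Real.exp (σ * Real.sqrt Δt) - Real.exp (-σ * Real.sqrt Δt));
         p * (1 - β * Real.sqrt Δt * (1 - p))
          - 1 / 2 - ((r - β * σ / 2) / (2 * σ) - σ / 4) * Real.sqrt Δt) / Δt)
      (nhdsWithin 0 (Set.Ioi 0)) (nhds 0) :=
  stmt_10_general r σ β hσ
end

section
/- The function V⁺(t,x) = x e^{s σ (T−t)} Φ(d₁⁺) − K e^{−r(T−t)} Φ(d₂⁺), with d₁⁺ = (log(x/K) + (r + sσ + σ²/2)(T−t))/(σ√(T−t)) and d₂⁺ = d₁⁺ − σ√(T−t), solves the nonlinear PDE V_t + r x V_x + (σ²x²/2) V_{xx} + s|σ x V_x| − r V = 0 on (0,T) × (0,∞). -/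
/-!
The PDE is checked by direct differentiation. Write `τ = T - t`, `E = e^{sστ}`, `F = e^{-rτ}` and
`d₂ = d₁ - σ√τ`. Completing the square in the Gaussian density gives `x E φ(d₁) = K F φ(d₂)`, so in
every derivative the terms carrying `φ` and a derivative of `d₁` cancel: `V_x = E Φ(d₁) ≥ 0`,
`V_xx = E φ(d₁) / (x σ √τ)` and `V_t = -sσ x E Φ(d₁) - r K F Φ(d₂) - K F φ(d₂) σ / (2√τ)`.
Substituting, the `Φ` terms cancel and the `φ` terms add up to `σ / (2√τ) (x E φ(d₁) - K F φ(d₂)) = 0`.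
-/

open Real MeasureTheory

/-- Standard normal cumulative distribution function. -/
noncomputable def stdNormalCDF (y : ℝ) : ℝ :=
  ∫ u in Set.Iio y, (2 * π) ^ (-(1 : ℝ) / 2) * Real.exp (-u ^ 2 / 2)

/-- `d₁⁺ = (log(x/K) + (r + sσ + σ²/2)(T − t)) / (σ √(T − t))`. -/
noncomputable def d1p (T K σ r s t x : ℝ) : ℝ :=
  (Real.log (x / K) + (r + s * σ + σ ^ 2 / 2) * (T - t)) / (σ * Real.sqrt (T - t))

/-- The risk-averse ask-price value function
`V⁺(t,x) = x e^{sσ(T−t)} Φ(d₁⁺) − K e^{−r(T−t)} Φ(d₂⁺)` with `d₂⁺ = d₁⁺ − σ√(T−t)`. -/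
noncomputable def Vplus (T K σ r s t x : ℝ) : ℝ :=
  x * Real.exp (s * σ * (T - t)) * stdNormalCDF (d1p T K σ r s t x) -
    K * Real.exp (-r * (T - t)) * stdNormalCDF (d1p T K σ r s t x - σ * Real.sqrt (T - t))

noncomputable def stdNormalPDF (u : ℝ) : ℝ := (2 * π) ^ (-(1 : ℝ) / 2) * exp (-u ^ 2 / 2)

lemma continuous_stdNormalPDF : Continuous stdNormalPDF := by
  unfold stdNormalPDF; fun_prop

lemma integrable_stdNormalPDF : Integrable stdNormalPDF := by
  convert (integrable_exp_neg_mul_sq (b := 1 / 2) (by norm_num)).const_mul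
    ((2 * π) ^ (-(1 : ℝ) / 2)) using 3
  rw [stdNormalPDF]
  ring_nf

lemma stdNormalCDF_nonneg (y : ℝ) : 0 ≤ stdNormalCDF y :=
  integral_nonneg fun _ => by positivity

lemma hasDerivAt_stdNormalCDF (y : ℝ) : HasDerivAt stdNormalCDF (stdNormalPDF y) y := by
  have hΦ : stdNormalCDF = fun z => stdNormalCDF 0 + ∫ u in (0 : ℝ)..z, stdNormalPDF u := by
    funext z
    rw [← intervalIntegral.integral_Iic_sub_Iic integrable_stdNormalPDF.integrableOn
      integrable_stdNormalPDF.integrableOn]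
    simp only [stdNormalCDF, stdNormalPDF, integral_Iic_eq_integral_Iio]
    ring
  rw [hΦ]
  exact (intervalIntegral.integral_hasDerivAt_right integrable_stdNormalPDF.intervalIntegrable
    (continuous_stdNormalPDF.stronglyMeasurableAtFilter _ _)
    continuous_stdNormalPDF.continuousAt).const_add _

lemma stdNormalPDF_sub (d a : ℝ) :
    stdNormalPDF (d - a) = stdNormalPDF d * exp (d * a - a ^ 2 / 2) := by
  rw [stdNormalPDF, stdNormalPDF, mul_assoc, ← exp_add]
  ring_nf

section BlackScholes

variable {T K σ r s t x : ℝ}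

lemma mul_exp_mul_stdNormalPDF_d1p (hK : 0 < K) (hσ : σ ≠ 0) (ht : t < T) (hx : 0 < x) :
    x * exp (s * σ * (T - t)) * stdNormalPDF (d1p T K σ r s t x) =
      K * exp (-r * (T - t)) * stdNormalPDF (d1p T K σ r s t x - σ * √(T - t)) := by
  have hτ : 0 < T - t := sub_pos.2 ht
  have ha : σ * √(T - t) ≠ 0 := mul_ne_zero hσ (sqrt_pos.2 hτ).ne'
  have hexponent : d1p T K σ r s t x * (σ * √(T - t)) - (σ * √(T - t)) ^ 2 / 2 =
      log (x / K) + (r + s * σ) * (T - t) := by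
    rw [d1p, div_mul_cancel₀ _ ha, mul_pow, sq_sqrt hτ.le]
    ring
  have hexp : exp (s * σ * (T - t)) = exp (-r * (T - t)) * exp ((r + s * σ) * (T - t)) := by
    rw [← exp_add]; ring_nf
  rw [stdNormalPDF_sub, hexponent, exp_add, exp_log (div_pos hx hK), hexp]
  field_simp

lemma hasDerivAt_d1p_x (hK : K ≠ 0) (hx : x ≠ 0) :
    HasDerivAt (d1p T K σ r s t) (1 / (x * (σ * √(T - t)))) x := by
  have h := ((((hasDerivAt_id x).div_const K).log (div_ne_zero hx hK)).add_const
    ((r + s * σ + σ ^ 2 / 2) * (T - t))).div_const (σ * √(T - t))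
  refine h.congr_deriv ?_
  simp only [id]
  field_simp

lemma hasDerivAt_Vplus_x (hK : 0 < K) (hσ : σ ≠ 0) (ht : t < T) (hx : 0 < x) :
    HasDerivAt (Vplus T K σ r s t) (exp (s * σ * (T - t)) * stdNormalCDF (d1p T K σ r s t x)) x := by
  have hd := hasDerivAt_d1p_x (σ := σ) (r := r) (s := s) (T := T) (t := t) hK.ne' hx.ne'
  have h := (((hasDerivAt_id x).mul_const (exp (s * σ * (T - t)))).mul
    ((hasDerivAt_stdNormalCDF _).comp x hd)).sub
    (((hasDerivAt_stdNormalCDF _).comp x (hd.sub_const (σ * √(T - t)))).const_mul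
      (K * exp (-r * (T - t))))
  refine h.congr_deriv ?_
  simp only [id, Function.comp_apply]
  linear_combination (1 / (x * (σ * √(T - t)))) * mul_exp_mul_stdNormalPDF_d1p hK hσ ht hx

lemma deriv_deriv_Vplus_x (hK : 0 < K) (hσ : σ ≠ 0) (ht : t < T) (hx : 0 < x) :
    deriv (deriv (Vplus T K σ r s t)) x =
      exp (s * σ * (T - t)) * (stdNormalPDF (d1p T K σ r s t x) * (1 / (x * (σ * √(T - t))))) := by
  have hVx : deriv (Vplus T K σ r s t) =ᶠ[nhds x]
      fun ξ => exp (s * σ * (T - t)) * stdNormalCDF (d1p T K σ r s t ξ) := by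
    filter_upwards [Ioi_mem_nhds hx] with ξ hξ
    exact (hasDerivAt_Vplus_x hK hσ ht hξ).deriv
  rw [hVx.deriv_eq]
  exact (((hasDerivAt_stdNormalCDF _).comp x
    (hasDerivAt_d1p_x hK.ne' hx.ne')).const_mul _).deriv

lemma hasDerivAt_mul_sqrt_sub (ht : t < T) :
    HasDerivAt (fun t' => σ * √(T - t')) (-(σ / (2 * √(T - t)))) t := by
  refine (((hasDerivAt_sqrt (sub_pos.2 ht).ne').comp t
    ((hasDerivAt_id t).const_sub T)).const_mul σ).congr_deriv ?_
  ring

lemma differentiableAt_d1p_t (hσ : σ ≠ 0) (ht : t < T) :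
    DifferentiableAt ℝ (fun t' => d1p T K σ r s t' x) t := by
  have hnum : DifferentiableAt ℝ
      (fun t' => log (x / K) + (r + s * σ + σ ^ 2 / 2) * (T - t')) t := by fun_prop
  exact hnum.div (hasDerivAt_mul_sqrt_sub ht).differentiableAt
    (mul_ne_zero hσ (sqrt_pos.2 (sub_pos.2 ht)).ne')

lemma hasDerivAt_Vplus_t (hK : 0 < K) (hσ : σ ≠ 0) (ht : t < T) (hx : 0 < x) :
    HasDerivAt (fun t' => Vplus T K σ r s t' x)
      (-(s * σ * x * exp (s * σ * (T - t)) * stdNormalCDF (d1p T K σ r s t x)) -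
        r * K * exp (-r * (T - t)) * stdNormalCDF (d1p T K σ r s t x - σ * √(T - t)) -
        K * exp (-r * (T - t)) * stdNormalPDF (d1p T K σ r s t x - σ * √(T - t)) *
          (σ / (2 * √(T - t)))) t := by
  have hd := (differentiableAt_d1p_t (K := K) (r := r) (s := s) (x := x) hσ ht).hasDerivAt
  have hexp (c : ℝ) : HasDerivAt (fun t' => exp (c * (T - t'))) (exp (c * (T - t)) * (c * -1)) t :=
    (((hasDerivAt_id t).const_sub T).const_mul c).exp
  have h := (((hexp (s * σ)).const_mul x).mul ((hasDerivAt_stdNormalCDF _).comp t hd)).sub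
    (((hexp (-r)).const_mul K).mul
      ((hasDerivAt_stdNormalCDF _).comp t (hd.sub (hasDerivAt_mul_sqrt_sub (σ := σ) ht))))
  refine h.congr_deriv ?_
  simp only [Function.comp_apply, Pi.sub_apply]
  linear_combination (deriv (fun t' => d1p T K σ r s t' x) t) *
    mul_exp_mul_stdNormalPDF_d1p hK hσ ht hx

end BlackScholes

theorem stmt_11_general (T K σ r s : ℝ) (hK : 0 < K) (hσ : 0 < σ) :
    ∀ t ∈ Set.Ioo (0 : ℝ) T, ∀ x ∈ Set.Ioi (0 : ℝ),
      deriv (fun τ => Vplus T K σ r s τ x) t +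
        r * x * deriv (fun ξ => Vplus T K σ r s t ξ) x +
        σ ^ 2 * x ^ 2 / 2 * deriv (deriv (fun ξ => Vplus T K σ r s t ξ)) x +
        s * |σ * x * deriv (fun ξ => Vplus T K σ r s t ξ) x| -
        r * Vplus T K σ r s t x = 0 := by
  intro t ⟨_, ht⟩ x (hx : 0 < x)
  have hVx := (hasDerivAt_Vplus_x (r := r) (s := s) hK hσ.ne' ht hx).deriv
  have hdelta_nonneg : 0 ≤ σ * x * deriv (Vplus T K σ r s t) x := by
    rw [hVx]; exact mul_nonneg (by positivity) (mul_nonneg (exp_pos _).le (stdNormalCDF_nonneg _))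
  have hgamma : σ ^ 2 * x ^ 2 / 2 * deriv (deriv (Vplus T K σ r s t)) x =
      σ / (2 * √(T - t)) * (x * exp (s * σ * (T - t)) * stdNormalPDF (d1p T K σ r s t x)) := by
    have hsqrt : √(T - t) ≠ 0 := (sqrt_pos.2 (sub_pos.2 ht)).ne'
    rw [deriv_deriv_Vplus_x hK hσ.ne' ht hx]
    field_simp
  rw [(hasDerivAt_Vplus_t hK hσ.ne' ht hx).deriv, hgamma, abs_of_nonneg hdelta_nonneg, hVx, Vplus]
  linear_combination σ / (2 * √(T - t)) * mul_exp_mul_stdNormalPDF_d1p hK hσ.ne' ht hx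

/-- `V⁺` solves the nonlinear PDE
`V_t + r x V_x + (σ² x²/2) V_xx + s |σ x V_x| − r V = 0` on `(0,T) × (0,∞)`. -/
theorem stmt_11 (T K σ r s : ℝ) (hT : 0 < T) (hK : 0 < K) (hσ : 0 < σ) (hs : 0 ≤ s) :
    ∀ t ∈ Set.Ioo (0 : ℝ) T, ∀ x ∈ Set.Ioi (0 : ℝ),
      deriv (fun τ => Vplus T K σ r s τ x) t +
        r * x * deriv (fun ξ => Vplus T K σ r s t ξ) x +
        σ ^ 2 * x ^ 2 / 2 * deriv (deriv (fun ξ => Vplus T K σ r s t ξ)) x +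
        s * |σ * x * deriv (fun ξ => Vplus T K σ r s t ξ) x| -
        r * Vplus T K σ r s t x = 0 :=
  stmt_11_general T K σ r s hK hσ
end

section
/- Let R(t,x) = f(t)^γ · x^{1−γ}/(1−γ) with f(t) = (1 + (νε−1)e^{−ν(T−t)})/ν and ν = −r(1−γ)/γ − ((1−γ)/γ²)(((μ−r)² + s²σ²)/(2σ²) − s/σ). Then R solves, on (0,T) × (0,∞), the PDE 0 = R_t − (((μ−r)² + s²σ²) R_x²)/(2σ² R_{xx}) + (s R_x |R_x|)/(σ R_{xx}) + r x R_x + (γ/(1−γ)) R_x^{(γ−1)/γ}, with terminal condition R(T,x) = ε^γ x^{1−γ}/(1−γ). -/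
/-!
The function `f` solves the linear ODE `f' = ν f - 1` with `f T = ε`, and stays positive on
`(-∞, T]`. Hence `R_t = γ (ν f - 1) f^(γ-1) x^(1-γ) / (1-γ)`, and with `u = R_x = f^γ x^(-γ) > 0`
one has `R_xx = -γ u / x` and `u^((γ-1)/γ) = f^(γ-1) x^(1-γ) = x u / f`. Every term of the PDE is
then a multiple of `x u`, and the total coefficient vanishes precisely by the choice of `ν`.
-/

open Real

lemma merton_f_pos {ν ε T t : ℝ} (hν : 0 < ν) (hε : 0 < ε) (ht : t ≤ T) :
    0 < (1 + (ν * ε - 1) * exp (-ν * (T - t))) / ν := by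
  have he0 : 0 < exp (-ν * (T - t)) := exp_pos _
  have he1 : exp (-ν * (T - t)) ≤ 1 := exp_le_one_iff.mpr (by nlinarith)
  apply div_pos _ hν
  nlinarith [mul_pos (mul_pos hν hε) he0]

lemma hasDerivAt_one_add_mul_exp_div {ν a T : ℝ} (hν : ν ≠ 0) (t : ℝ) :
    HasDerivAt (fun τ => (1 + a * exp (-ν * (T - τ))) / ν)
      (ν * ((1 + a * exp (-ν * (T - t))) / ν) - 1) t := by
  have hlin : HasDerivAt (fun τ : ℝ => -ν * (T - τ)) ν t := by
    simpa using ((hasDerivAt_id t).const_sub T).const_mul (-ν)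
  refine (((hlin.exp.const_mul a).const_add 1).div_const ν).congr_deriv ?_
  field_simp
  ring

lemma hasDerivAt_mul_rpow_one_sub_div (a : ℝ) {γ x : ℝ} (hγ : γ ≠ 1) (hx : x ≠ 0) :
    HasDerivAt (fun ξ => a * ξ ^ (1 - γ) / (1 - γ)) (a * x ^ (-γ)) x := by
  have h1γ : 1 - γ ≠ 0 := sub_ne_zero.mpr hγ.symm
  refine (((hasDerivAt_rpow_const (p := 1 - γ) (Or.inl hx)).const_mul a).div_const
    (1 - γ)).congr_deriv ?_
  field_simp
  ring_nf

lemma deriv_deriv_mul_rpow_one_sub_div (a : ℝ) {γ x : ℝ} (hγ : γ ≠ 1) (hx : x ≠ 0) :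
    deriv (deriv fun ξ => a * ξ ^ (1 - γ) / (1 - γ)) x = -γ * (a * x ^ (-γ)) / x := by
  have hderiv : deriv (fun ξ => a * ξ ^ (1 - γ) / (1 - γ)) =ᶠ[nhds x] fun ξ => a * ξ ^ (-γ) := by
    filter_upwards [eventually_ne_nhds hx] with ξ hξ
    exact (hasDerivAt_mul_rpow_one_sub_div a hγ hξ).deriv
  rw [hderiv.deriv_eq, ((hasDerivAt_rpow_const (p := -γ) (Or.inl hx)).const_mul a).deriv,
    rpow_sub_one hx]
  ring

lemma rpow_sub_one_mul_rpow_one_sub {c x : ℝ} (hc : c ≠ 0) (hx : x ≠ 0) (γ : ℝ) :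
    c ^ (γ - 1) * x ^ (1 - γ) = x * (c ^ γ * x ^ (-γ)) / c := by
  rw [rpow_sub_one hc, sub_eq_neg_add, rpow_add_one hx]
  ring

lemma rpow_mul_rpow_neg_rpow {c x γ : ℝ} (hc : 0 ≤ c) (hx : 0 ≤ x) (hγ : γ ≠ 0) :
    (c ^ γ * x ^ (-γ)) ^ ((γ - 1) / γ) = c ^ (γ - 1) * x ^ (1 - γ) := by
  rw [mul_rpow (rpow_nonneg hc γ) (rpow_nonneg hx _), ← rpow_mul hc, ← rpow_mul hx]
  congr 2
  · field_simp
  · field_simp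
    ring

lemma merton_hjb_identity {r μ σ s γ ν c x u : ℝ} (hσ : σ ≠ 0) (hγ : γ ≠ 0) (hγ1 : γ ≠ 1)
    (hc : c ≠ 0) (hu : 0 < u)
    (hν : ν = -r * (1 - γ) / γ -
      (1 - γ) / γ ^ 2 * (((μ - r) ^ 2 + s ^ 2 * σ ^ 2) / (2 * σ ^ 2) - s / σ)) :
    0 = (ν * c - 1) * γ * (x * u / c) / (1 - γ) -
        ((μ - r) ^ 2 + s ^ 2 * σ ^ 2) * u ^ 2 / (2 * σ ^ 2 * (-γ * u / x)) +
        s * u * |u| / (σ * (-γ * u / x)) + r * x * u + γ / (1 - γ) * (x * u / c) := by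
  have h1γ : 1 - γ ≠ 0 := sub_ne_zero.mpr hγ1.symm
  rw [abs_of_pos hu, hν]
  field_simp
  ring

theorem stmt_15_general (T r μ σ s γ ε ν : ℝ)
    (hσ : 0 < σ) (hγ : 0 < γ) (hγ1 : γ ≠ 1) (hε : 0 < ε)
    (hνdef : ν = -r * (1 - γ) / γ -
      (1 - γ) / γ ^ 2 * (((μ - r) ^ 2 + s ^ 2 * σ ^ 2) / (2 * σ ^ 2) - s / σ))
    (hν : 0 < ν)
    (f : ℝ → ℝ) (hf : ∀ t, f t = (1 + (ν * ε - 1) * Real.exp (-ν * (T - t))) / ν)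
    (R : ℝ → ℝ → ℝ) (hR : ∀ t x, R t x = f t ^ γ * x ^ (1 - γ) / (1 - γ)) :
    (∀ t ∈ Set.Ioo (0 : ℝ) T, ∀ x ∈ Set.Ioi (0 : ℝ),
      0 = deriv (fun τ => R τ x) t -
        ((μ - r) ^ 2 + s ^ 2 * σ ^ 2) * (deriv (fun ξ => R t ξ) x) ^ 2 /
          (2 * σ ^ 2 * deriv (deriv (fun ξ => R t ξ)) x) +
        s * deriv (fun ξ => R t ξ) x * |deriv (fun ξ => R t ξ) x| /
          (σ * deriv (deriv (fun ξ => R t ξ)) x) +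
        r * x * deriv (fun ξ => R t ξ) x +
        γ / (1 - γ) * (deriv (fun ξ => R t ξ) x) ^ ((γ - 1) / γ)) ∧
    (∀ x ∈ Set.Ioi (0 : ℝ), R T x = ε ^ γ * x ^ (1 - γ) / (1 - γ)) := by
  obtain rfl : R = fun t x => f t ^ γ * x ^ (1 - γ) / (1 - γ) := funext₂ hR
  refine ⟨fun t ht x (hx : 0 < x) => ?_, fun x _ => ?_⟩
  · have hc : 0 < f t := hf t ▸ merton_f_pos hν hε ht.2.le
    have hf' : HasDerivAt f (ν * f t - 1) t := by
      rw [hf t, funext hf]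
      exact hasDerivAt_one_add_mul_exp_div hν.ne' t
    rw [(((hf'.rpow_const (Or.inl hc.ne')).mul_const _).div_const _).deriv,
      (hasDerivAt_mul_rpow_one_sub_div _ hγ1 hx.ne').deriv,
      deriv_deriv_mul_rpow_one_sub_div _ hγ1 hx.ne', rpow_mul_rpow_neg_rpow hc.le hx.le hγ.ne',
      mul_assoc, rpow_sub_one_mul_rpow_one_sub hc.ne' hx.ne']
    exact merton_hjb_identity hσ.ne' hγ.ne' hγ1 hc.ne' (by positivity) hνdef
  · simp [hf, hν.ne']

/-- Solution of the risk-averse Merton problem: with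
`f(t) = (1 + (νε − 1)e^{−ν(T−t)})/ν` and
`ν = −r(1−γ)/γ − ((1−γ)/γ²)(((μ−r)² + s²σ²)/(2σ²) − s/σ)`,
the function `R(t,x) = f(t)^γ x^{1−γ}/(1−γ)` solves the reduced HJB PDE
`0 = R_t − ((μ−r)² + s²σ²) R_x²/(2σ² R_xx) + s R_x |R_x|/(σ R_xx) + r x R_x
+ (γ/(1−γ)) R_x^{(γ−1)/γ}` on `(0,T) × (0,∞)`, with `R(T,x) = ε^γ x^{1−γ}/(1−γ)`. -/
theorem stmt_15 (T r μ σ s γ ε ν : ℝ)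
    (hT : 0 < T) (hσ : 0 < σ) (hs : 0 ≤ s) (hγ : 0 < γ) (hγ1 : γ ≠ 1) (hε : 0 < ε)
    (hνdef : ν = -r * (1 - γ) / γ -
      (1 - γ) / γ ^ 2 * (((μ - r) ^ 2 + s ^ 2 * σ ^ 2) / (2 * σ ^ 2) - s / σ))
    (hν : 0 < ν)
    (f : ℝ → ℝ) (hf : ∀ t, f t = (1 + (ν * ε - 1) * Real.exp (-ν * (T - t))) / ν)
    (R : ℝ → ℝ → ℝ) (hR : ∀ t x, R t x = f t ^ γ * x ^ (1 - γ) / (1 - γ)) :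
    (∀ t ∈ Set.Ioo (0 : ℝ) T, ∀ x ∈ Set.Ioi (0 : ℝ),
      0 = deriv (fun τ => R τ x) t -
        ((μ - r) ^ 2 + s ^ 2 * σ ^ 2) * (deriv (fun ξ => R t ξ) x) ^ 2 /
          (2 * σ ^ 2 * deriv (deriv (fun ξ => R t ξ)) x) +
        s * deriv (fun ξ => R t ξ) x * |deriv (fun ξ => R t ξ) x| /
          (σ * deriv (deriv (fun ξ => R t ξ)) x) +
        r * x * deriv (fun ξ => R t ξ) x +
        γ / (1 - γ) * (deriv (fun ξ => R t ξ) x) ^ ((γ - 1) / γ)) ∧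
    (∀ x ∈ Set.Ioi (0 : ℝ), R T x = ε ^ γ * x ^ (1 - γ) / (1 - γ)) :=
  stmt_15_general T r μ σ s γ ε ν hσ hγ hγ1 hε hνdef hν f hf R hR
end
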